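/- Let p ≥ 1 and q be integers with p² + 4q > 0 and p² + 2q − 2 < p·√(p² + 4q), set α = (p + √(p² + 4q))/2, β = (p − √(p² + 4q))/2, let a, b be integers with c₁ = (b − aβ)/(α − β) > 0, and define Wₙ = c₁αⁿ − c₂βⁿ where c₂ = (b − aα)/(α − β). Let m ≥ 1 and s₀ ≥ 1 be integers and let l₀ be an integer with l₀ ≥ 1 − m. Then lim_{n→∞} [ (Σ_{k=n}^{∞} 1/(s₀·W_{mk+l₀}))^{−1} − (s₀·W_{mn+l₀} − s₀·W_{m(n−1)+l₀}) ] = 0. -/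

import Mathlib

/-!
Put `g j = s₀ W_{mj+l₀} = A rʲ + e j` with `A = s₀ c₁ α^{l₀} > 0`, `r = αᵐ ≥ 1` and
`e j = O(ρʲ)`, `ρ = |β|ᵐ < 1`. For the geometric part `h j = A rʲ` the tail sums are exact:
`(∑_{k ≥ n} 1 / h k)⁻¹ = h n - h (n - 1)`. Replacing `h` by `g` changes each `1 / g k` by
`O((ρ / r²)ᵏ)`, hence the tail sum by `O((ρ / r²)ⁿ)`; since the tail sum is of exact order
`r⁻ⁿ`, its inverse moves by `O((ρ / r²)ⁿ r²ⁿ) = O(ρⁿ) → 0`. Finally `e n - e (n - 1) → 0`.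
-/

open Filter Asymptotics Topology

theorem zpow_natCast_mul_add {G₀ : Type*} [CommGroupWithZero G₀] {x : G₀} (hx : x ≠ 0)
    (m j : ℕ) (l : ℤ) : x ^ ((m : ℤ) * j + l) = x ^ l * (x ^ m) ^ j := by
  rw [zpow_add₀ hx, ← Nat.cast_mul, zpow_natCast, pow_mul, mul_comm]

theorem isBigO_zpow_natCast_mul_add (x : ℝ) {m : ℕ} (hm : 0 < m) (l : ℤ) :
    (fun j : ℕ => x ^ ((m : ℤ) * j + l)) =O[atTop] fun j => (|x| ^ m) ^ j := by
  rcases eq_or_ne x 0 with rfl | hx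
  · refine EventuallyEq.trans_isBigO ?_ (isBigO_zero _ _)
    filter_upwards [eventually_gt_atTop l.natAbs] with j hj
    have : (j : ℤ) ≤ m * j := le_mul_of_one_le_left (by positivity) (by exact_mod_cast hm)
    exact zero_zpow _ (by omega)
  · simp_rw [zpow_natCast_mul_add hx, ← abs_pow]
    exact (isBigO_abs_right.2 (isBigO_refl _ _)).const_mul_left _

section

variable {g : ℕ → ℝ} {A r ρ : ℝ}

theorem summable_inv_mul_pow (hr : 1 < r) : Summable fun n : ℕ => (A * r ^ n)⁻¹ := by
  simp_rw [mul_inv, ← inv_pow]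
  exact (summable_geometric_of_lt_one (by positivity) (inv_lt_one_of_one_lt₀ hr)).mul_left _

theorem tsum_inv_mul_pow_add (hr : 1 < r) (n : ℕ) :
    ∑' k, (A * r ^ (n + k))⁻¹ = (A * (1 - r⁻¹) * r ^ n)⁻¹ := by
  simp_rw [pow_add, ← mul_assoc, mul_inv (A * r ^ n), ← inv_pow]
  rw [tsum_mul_left, tsum_geometric_of_lt_one (by positivity) (inv_lt_one_of_one_lt₀ hr)]
  simp only [mul_inv]
  ring

theorem isBigO_tsum_nat_add {f : ℕ → ℝ} {σ : ℝ} (hσ0 : 0 ≤ σ) (hσ : σ < 1)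
    (hf : f =O[atTop] (σ ^ ·)) : (fun n => ∑' k, f (n + k)) =O[atTop] (σ ^ ·) := by
  obtain ⟨C, hC⟩ := hf.bound
  obtain ⟨N, hN⟩ := eventually_atTop.1 hC
  refine IsBigO.of_bound (C * (1 - σ)⁻¹) ?_
  filter_upwards [eventually_ge_atTop N] with n hn
  have hsum : HasSum (fun k => C * σ ^ n * σ ^ k) (C * σ ^ n * (1 - σ)⁻¹) :=
    (hasSum_geometric_of_lt_one hσ0 hσ).mul_left _
  calc ‖∑' k, f (n + k)‖ ≤ C * σ ^ n * (1 - σ)⁻¹ := tsum_of_norm_bounded hsum fun k => by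
        simpa [pow_add, mul_assoc, abs_of_nonneg hσ0] using hN (n + k) (by omega)
    _ = C * (1 - σ)⁻¹ * ‖σ ^ n‖ := by rw [Real.norm_of_nonneg (by positivity)]; ring

theorem tsum_inv_nat_add_eq_zero (hA : A ≠ 0) (hg : Tendsto g atTop (𝓝 A)) (n : ℕ) :
    ∑' k, (g (n + k))⁻¹ = 0 := by
  refine tsum_eq_zero_of_not_summable fun hs => ?_
  have h0 := ((summable_nat_add_iff (f := fun k => (g k)⁻¹) n).1
    (by simpa only [add_comm] using hs)).tendsto_atTop_zero
  exact inv_ne_zero hA (tendsto_nhds_unique (hg.inv₀ hA) h0)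

theorem isEquivalent_mul_pow_of_isBigO (hA : A ≠ 0) (hρ0 : 0 ≤ ρ) (hρr : ρ < r)
    (he : (fun n => g n - A * r ^ n) =O[atTop] (ρ ^ ·)) : g ~[atTop] fun n => A * r ^ n :=
  he.trans_isLittleO ((isLittleO_pow_pow_of_lt_left hρ0 hρr).const_mul_right hA)

theorem isBigO_inv_sub_inv_mul_pow (hA : A ≠ 0) (hρ0 : 0 ≤ ρ) (hρr : ρ < r)
    (he : (fun n => g n - A * r ^ n) =O[atTop] (ρ ^ ·)) :
    (fun n => (g n)⁻¹ - (A * r ^ n)⁻¹) =O[atTop] fun n => (ρ / r ^ 2) ^ n := by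
  have hequiv := isEquivalent_mul_pow_of_isBigO hA hρ0 hρr he
  have hr : r ≠ 0 := by linarith
  have hh : ∀ n, A * r ^ n ≠ 0 := fun n => by positivity
  have hg : ∀ᶠ n in atTop, g n ≠ 0 :=
    hequiv.symm.isBigO.eq_zero_imp.mono fun n h hgn => hh n (h hgn)
  have hprod : (fun n => (g n)⁻¹ * (A * r ^ n)⁻¹) =O[atTop]
      fun n => (A * r ^ n)⁻¹ * (A * r ^ n)⁻¹ :=
    (hequiv.inv.mul IsEquivalent.refl).isBigO
  have hsplit : (fun n => (g n)⁻¹ - (A * r ^ n)⁻¹) =ᶠ[atTop]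
      fun n => -(g n - A * r ^ n) * ((g n)⁻¹ * (A * r ^ n)⁻¹) :=
    hg.mono fun n hgn => by field_simp; ring
  refine hsplit.trans_isBigO ((he.neg_left.mul hprod).trans ?_)
  refine ((isBigO_refl (fun n => (ρ / r ^ 2) ^ n) atTop).const_mul_left (A ^ 2)⁻¹).congr_left
    fun n => ?_
  rw [div_pow, ← pow_mul, mul_comm 2 n, pow_mul]
  field_simp

theorem tendsto_inv_tsum_nat_add_sub_mul_pow (hA : 0 < A) (hr : 1 < r) (hρ0 : 0 ≤ ρ)
    (hρ : ρ < 1) (he : (fun n => g n - A * r ^ n) =O[atTop] (ρ ^ ·)) :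
    Tendsto (fun n => (∑' k, (g (n + k))⁻¹)⁻¹ - A * (1 - r⁻¹) * r ^ n) atTop (𝓝 0) := by
  set B := A * (1 - r⁻¹)
  set T := fun n => ∑' k, (g (n + k))⁻¹
  have hr0 : 0 < r := by linarith
  have hB : 0 < B := mul_pos hA (sub_pos.2 (inv_lt_one_of_one_lt₀ hr))
  have hρr : ρ < r := hρ.trans hr
  have hσ : ρ / r ^ 2 < r⁻¹ := by
    rw [div_lt_iff₀ (by positivity)]; field_simp; linarith
  have hequiv := isEquivalent_mul_pow_of_isBigO hA.ne' hρ0 hρr he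
  have hsum : ∀ n, Summable fun k => (g (n + k))⁻¹ := fun n =>
    (summable_of_isBigO_nat (summable_inv_mul_pow hr) hequiv.inv.isBigO).comp_injective
      (add_right_injective n)
  have hsum' : ∀ n, Summable fun k => (A * r ^ (n + k))⁻¹ := fun n =>
    (summable_inv_mul_pow hr).comp_injective (add_right_injective n)
  have hT : (fun n => T n - (B * r ^ n)⁻¹) =O[atTop] fun n => (ρ / r ^ 2) ^ n := by
    refine (isBigO_tsum_nat_add (by positivity) (hσ.trans (inv_lt_one_of_one_lt₀ hr))
      (isBigO_inv_sub_inv_mul_pow hA.ne' hρ0 hρr he)).congr_left fun n => ?_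
    rw [← tsum_inv_mul_pow_add hr, ← (hsum n).tsum_sub (hsum' n)]
  clear_value B
  have hTequiv : T ~[atTop] fun n => (B * r ^ n)⁻¹ := by
    refine hT.trans_isLittleO ((isLittleO_pow_pow_of_lt_left (by positivity) hσ).trans_isBigO ?_)
    exact ((isBigO_refl _ _).const_mul_left B).congr_left fun n => by
      rw [mul_inv, ← mul_assoc, mul_inv_cancel₀ hB.ne', one_mul, inv_pow]
  have hTne : ∀ᶠ n in atTop, T n ≠ 0 :=
    hTequiv.symm.isBigO.eq_zero_imp.mono fun n h hTn => (by positivity : (B * r ^ n)⁻¹ ≠ 0) (h hTn)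
  have hratio : (fun n => B * r ^ n * (T n)⁻¹) =O[atTop] fun n => B * r ^ n * (B * r ^ n) := by
    refine (IsEquivalent.refl.mul hTequiv.inv).isBigO.congr (fun n => rfl) fun n => ?_
    simp only [Pi.mul_apply, Pi.inv_apply, inv_inv]
  have hsplit : (fun n => (T n)⁻¹ - B * r ^ n) =ᶠ[atTop]
      fun n => -(T n - (B * r ^ n)⁻¹) * (B * r ^ n * (T n)⁻¹) :=
    hTne.mono fun n hTn => by field_simp; ring
  have hrate : (fun n => (ρ / r ^ 2) ^ n * (B * r ^ n * (B * r ^ n))) = fun n => B ^ 2 * ρ ^ n := by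
    funext n
    rw [div_pow, ← pow_mul, mul_comm 2 n, pow_mul]
    field_simp
  refine (hsplit.trans_isBigO (hT.neg_left.mul hratio)).trans_tendsto ?_
  simpa [hrate] using (tendsto_pow_atTop_nhds_zero_of_lt_one hρ0 hρ).const_mul (B ^ 2)

theorem tendsto_inv_tsum_nat_add_sub_sub (hA : 0 < A) (hr : 1 ≤ r) (hρ0 : 0 ≤ ρ) (hρ : ρ < 1)
    (he : (fun n => g n - A * r ^ n) =O[atTop] (ρ ^ ·)) :
    Tendsto (fun n => (∑' k, (g (n + k))⁻¹)⁻¹ - (g n - g (n - 1))) atTop (𝓝 0) := by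
  have he0 : Tendsto (fun n => g n - A * r ^ n) atTop (𝓝 0) :=
    he.trans_tendsto (tendsto_pow_atTop_nhds_zero_of_lt_one hρ0 hρ)
  have hmain :
      Tendsto (fun n => (∑' k, (g (n + k))⁻¹)⁻¹ - A * (1 - r⁻¹) * r ^ n) atTop (𝓝 0) := by
    rcases hr.eq_or_lt with rfl | hr
    · -- for `r = 1` the series diverges, so `∑'` is `0` by convention, as is the main term
      have hg : Tendsto g atTop (𝓝 A) := by simpa using he0.add_const A
      simp [tsum_inv_nat_add_eq_zero hA.ne' hg]
    · exact tendsto_inv_tsum_nat_add_sub_mul_pow hA hr hρ0 hρ he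
  have hdiff := hmain.sub (he0.sub (he0.comp (tendsto_sub_atTop_nat 1)))
  rw [sub_zero, sub_zero] at hdiff
  refine hdiff.congr' ?_
  filter_upwards [eventually_ge_atTop 1] with n hn
  obtain ⟨j, rfl⟩ := Nat.exists_eq_add_of_le' hn
  have hr0 : r ≠ 0 := by positivity
  simp only [Function.comp_apply, Nat.add_sub_cancel, pow_succ]
  field_simp
  ring

end

theorem one_le_add_sqrt_div_two {p q : ℤ} (hp : 1 ≤ p) (hdisc : 0 < (p : ℝ) ^ 2 + 4 * q) :
    1 ≤ ((p : ℝ) + √((p : ℝ) ^ 2 + 4 * q)) / 2 := by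
  have hD : 1 ≤ √((p : ℝ) ^ 2 + 4 * q) := by
    refine Real.one_le_sqrt.2 ?_
    have : (0 : ℤ) < p ^ 2 + 4 * q := by exact_mod_cast hdisc
    exact_mod_cast this
  have : (1 : ℝ) ≤ p := by exact_mod_cast hp
  linarith

theorem abs_sub_sqrt_div_two_lt_one {p q : ℝ} (hdisc : 0 ≤ p ^ 2 + 4 * q)
    (hcond : p ^ 2 + 2 * q - 2 < p * √(p ^ 2 + 4 * q)) : |(p - √(p ^ 2 + 4 * q)) / 2| < 1 := by
  have := Real.sq_sqrt hdisc
  rw [← sq_lt_one_iff_abs_lt_one]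
  nlinarith

theorem inverse_tail_sum_single_term_general (p q : ℤ) (α β c₁ c₂ : ℝ)
    (hp : 1 ≤ p)
    (hdisc : 0 < (p : ℝ) ^ 2 + 4 * q)
    (hcond : (p : ℝ) ^ 2 + 2 * q - 2 < p * Real.sqrt ((p : ℝ) ^ 2 + 4 * q))
    (hα : α = ((p : ℝ) + Real.sqrt ((p : ℝ) ^ 2 + 4 * q)) / 2)
    (hβ : β = ((p : ℝ) - Real.sqrt ((p : ℝ) ^ 2 + 4 * q)) / 2)
    (hc₁pos : 0 < c₁)
    (W : ℤ → ℝ) (hW : ∀ n : ℤ, W n = c₁ * α ^ n - c₂ * β ^ n)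
    (m s₀ : ℕ) (hm : 1 ≤ m) (hs₀ : 1 ≤ s₀)
    (l₀ : ℤ) :
    Tendsto (fun n : ℕ =>
      (∑' k : ℕ, 1 / ((s₀ : ℝ) * W ((m : ℤ) * (n + k) + l₀)))⁻¹ -
      ((s₀ : ℝ) * W ((m : ℤ) * n + l₀) - (s₀ : ℝ) * W ((m : ℤ) * ((n : ℤ) - 1) + l₀)))
      atTop (nhds 0) := by
  have hα1 : 1 ≤ α := hα ▸ one_le_add_sqrt_div_two hp hdisc
  have hβ1 : |β| < 1 := hβ ▸ abs_sub_sqrt_div_two_lt_one hdisc.le hcond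
  set g : ℕ → ℝ := fun j => s₀ * W (m * j + l₀)
  have hA : 0 < s₀ * c₁ * α ^ l₀ := by
    have : (0 : ℝ) < s₀ := by exact_mod_cast hs₀
    have : 0 < α := by linarith
    positivity
  have he : (fun j => g j - s₀ * c₁ * α ^ l₀ * (α ^ m) ^ j) =O[atTop] ((|β| ^ m) ^ ·) := by
    refine ((isBigO_zpow_natCast_mul_add β hm l₀).const_mul_left (-(s₀ * c₂))).congr_left
      fun j => ?_
    simp only [g, hW, zpow_natCast_mul_add (by linarith : α ≠ 0)]
    ring
  refine (tendsto_inv_tsum_nat_add_sub_sub hA (one_le_pow₀ hα1) (by positivity)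
    (pow_lt_one₀ (abs_nonneg β) hβ1 (by omega)) he).congr' ?_
  filter_upwards [eventually_ge_atTop 1] with n hn
  simp only [g, one_div, Nat.cast_add, Nat.cast_sub hn, Nat.cast_one]

/-- Corollary 3.1: the inverse of the tail sum `Σ_{k=n}^∞ 1/(s₀·W_{mk+l₀})` is
asymptotically `s₀·W_{mn+l₀} − s₀·W_{m(n−1)+l₀}`. -/
theorem inverse_tail_sum_single_term (p q a b : ℤ) (α β c₁ c₂ : ℝ)
    (hp : 1 ≤ p)
    (hdisc : 0 < (p : ℝ) ^ 2 + 4 * q)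
    (hcond : (p : ℝ) ^ 2 + 2 * q - 2 < p * Real.sqrt ((p : ℝ) ^ 2 + 4 * q))
    (hα : α = ((p : ℝ) + Real.sqrt ((p : ℝ) ^ 2 + 4 * q)) / 2)
    (hβ : β = ((p : ℝ) - Real.sqrt ((p : ℝ) ^ 2 + 4 * q)) / 2)
    (hc₁ : c₁ = ((b : ℝ) - a * β) / (α - β))
    (hc₂ : c₂ = ((b : ℝ) - a * α) / (α - β))
    (hc₁pos : 0 < c₁)
    (W : ℤ → ℝ) (hW : ∀ n : ℤ, W n = c₁ * α ^ n - c₂ * β ^ n)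
    (m s₀ : ℕ) (hm : 1 ≤ m) (hs₀ : 1 ≤ s₀)
    (l₀ : ℤ) (hl₀ : 1 - (m : ℤ) ≤ l₀) :
    Tendsto (fun n : ℕ =>
      (∑' k : ℕ, 1 / ((s₀ : ℝ) * W ((m : ℤ) * (n + k) + l₀)))⁻¹ -
      ((s₀ : ℝ) * W ((m : ℤ) * n + l₀) - (s₀ : ℝ) * W ((m : ℤ) * ((n : ℤ) - 1) + l₀)))
      atTop (nhds 0) :=
  inverse_tail_sum_single_term_general p q α β c₁ c₂ hp hdisc hcond hα hβ hc₁pos W hW m s₀ hm hs₀ l₀
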